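/- arXiv:1411.0187 — 2 statements merged into one kernel-verified Lean document; each statement's English description precedes it below -/
import Mathlib

section
/- Degradation of mod-2 Gaussian channels in noise: for 0 < σ' ≤ σ, the mod-2ℤ BAWGN channel with noise variance σ² is stochastically degraded with respect to the one with variance σ'², via the intermediate channel given by adding an independent mod-2 Gaussian noise of variance σ² - σ'². Concretely, for all x ∈ {0,1} and y ∈ [-1,1): ∫_{-1}^{1} W'(y'|x; σ'²) · W(y|y'; σ²-σ'²) dy' = W₁(y|x; σ²), where W₁(y|x;s²) = (1/√(2πs²)) Σ_{i∈2ℤ} exp(-(y-x-i)²/(2s²)). -/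
open MeasureTheory

/-- Transition density of the mod-2ℤ Gaussian channel with standard deviation `s`:
input `x`, output `y ∈ [-1,1)`. -/
noncomputable def W1 (s x y : ℝ) : ℝ :=
  (Real.sqrt (2 * Real.pi * s ^ 2))⁻¹ *
    ∑' k : ℤ, Real.exp (-(y - x - 2 * (k : ℝ)) ^ 2 / (2 * s ^ 2))

section AuxLemmas

open Real Set
open scoped ENNReal

lemma aux_summable_nat (v c : ℝ) (hv : 0 < v) :
    Summable (fun n : ℕ => Real.exp (-(c - 2 * n) ^ 2 / (2 * v))) := by
  have h := (Real.summable_exp_neg_nat).mul_left (Real.exp ((2 * c + v) ^ 2 / (8 * v)))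
  refine Summable.of_nonneg_of_le (fun n => (Real.exp_nonneg _)) (fun n => ?_) h
  rw [← Real.exp_add]
  apply Real.exp_le_exp.2
  have hn : (0:ℝ) ≤ n := Nat.cast_nonneg n
  rw [div_le_iff₀ (by positivity : (0:ℝ) < 2 * v)]
  have h8 : (2 * c + v) ^ 2 / (8 * v) * (8 * v) = (2 * c + v) ^ 2 := by field_simp
  nlinarith [sq_nonneg (2 * (n:ℝ) - (2*c + v)/2), sq_nonneg (c - 2*(n:ℝ)), sq_nonneg c]

lemma aux_summable (v : ℝ) (hv : 0 < v) (c : ℝ) :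
    Summable (fun k : ℤ => Real.exp (-(c - 2 * k) ^ 2 / (2 * v))) := by
  apply Summable.of_nat_of_neg
  · exact_mod_cast aux_summable_nat v c hv
  · have := aux_summable_nat v (-c) hv
    refine this.congr fun n => ?_
    push_cast
    ring_nf

lemma aux_gauss_integrable (v : ℝ) (hv : 0 < v) (a : ℝ) :
    Integrable (fun t : ℝ => Real.exp (-(t - a) ^ 2 / (2 * v))) := by
  have h : Integrable (fun t : ℝ => Real.exp (-(2 * v)⁻¹ * t ^ 2)) :=
    integrable_exp_neg_mul_sq (by positivity)
  have h2 : Integrable (fun t : ℝ => Real.exp (-t ^ 2 / (2 * v))) := by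
    refine h.congr ?_
    filter_upwards with t
    congr 1
    field_simp
  simpa using h2.comp_sub_right a

lemma aux_gauss_conv (v1 v2 : ℝ) (h1 : 0 < v1) (h2 : 0 < v2) (a b : ℝ) :
    ∫ t : ℝ, Real.exp (-(t - a) ^ 2 / (2 * v1)) * Real.exp (-(b - t) ^ 2 / (2 * v2))
      = Real.sqrt (2 * Real.pi * (v1 * v2 / (v1 + v2))) *
          Real.exp (-(b - a) ^ 2 / (2 * (v1 + v2))) := by
  have hV : 0 < v1 + v2 := by linarith
  set m : ℝ := (a * v2 + b * v1) / (v1 + v2) with hm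
  set A : ℝ := (v1 + v2) / (2 * v1 * v2) with hA
  have hApos : 0 < A := by positivity
  have key : ∀ t : ℝ, Real.exp (-(t - a) ^ 2 / (2 * v1)) * Real.exp (-(b - t) ^ 2 / (2 * v2))
      = Real.exp (-(b - a) ^ 2 / (2 * (v1 + v2))) * Real.exp (-A * (t - m) ^ 2) := by
    intro t
    rw [← Real.exp_add, ← Real.exp_add]
    congr 1
    rw [hA, hm]
    field_simp
    ring
  simp_rw [key]
  rw [MeasureTheory.integral_const_mul]
  have : ∫ t : ℝ, Real.exp (-A * (t - m) ^ 2) = ∫ t : ℝ, Real.exp (-A * t ^ 2) :=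
    integral_sub_right_eq_self (fun t => Real.exp (-A * t ^ 2)) m
  rw [this, integral_gaussian]
  rw [mul_comm]
  congr 1
  rw [hA]
  congr 1
  field_simp

lemma aux_lint_shift (g : ℝ → ℝ≥0∞) (a b c : ℝ) :
    ∫⁻ t in Set.Ico a b, g (t - c) = ∫⁻ t in Set.Ico (a - c) (b - c), g t := by
  rw [← lintegral_indicator measurableSet_Ico (fun t => g (t - c)),
    ← lintegral_indicator measurableSet_Ico g]
  have h : ∀ t : ℝ, (Set.Ico a b).indicator (fun t => g (t - c)) t
      = (Set.Ico (a - c) (b - c)).indicator g (t - c) := by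
    intro t
    by_cases ht : t ∈ Set.Ico a b
    · rw [Set.indicator_of_mem ht, Set.indicator_of_mem]
      obtain ⟨h1, h2⟩ := ht
      exact ⟨by linarith, by linarith⟩
    · rw [Set.indicator_of_notMem ht, Set.indicator_of_notMem]
      rintro ⟨h1, h2⟩
      exact ht ⟨by linarith, by linarith⟩
  simp_rw [h]
  exact lintegral_sub_right_eq_self (fun t => (Set.Ico (a - c) (b - c)).indicator g t) c

lemma aux_cover (g : ℝ → ℝ≥0∞) :
    ∑' k : ℤ, ∫⁻ t in Set.Ico (-1 - 2 * (k : ℝ)) (1 - 2 * (k : ℝ)), g t = ∫⁻ t, g t := by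
  have hU : (⋃ k : ℤ, Set.Ico (-1 - 2 * (k : ℝ)) (1 - 2 * (k : ℝ))) = Set.univ := by
    ext t
    simp only [Set.mem_iUnion, Set.mem_Ico, Set.mem_univ, iff_true]
    refine ⟨-⌊(t + 1) / 2⌋, ?_, ?_⟩
    · push_cast
      have := Int.floor_le ((t + 1) / 2)
      linarith
    · push_cast
      have := Int.lt_floor_add_one ((t + 1) / 2)
      linarith
  have hd : Pairwise (Function.onFun Disjoint
      (fun k : ℤ => Set.Ico (-1 - 2 * (k : ℝ)) (1 - 2 * (k : ℝ)))) := by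
    intro k l hkl
    apply Set.Ico_disjoint_Ico.2
    rcases lt_or_gt_of_ne hkl with h | h
    · have : (k : ℝ) + 1 ≤ l := by exact_mod_cast h
      calc min (1 - 2 * (k:ℝ)) (1 - 2 * (l:ℝ)) ≤ 1 - 2 * (l:ℝ) := min_le_right _ _
        _ ≤ -1 - 2 * (k:ℝ) := by linarith
        _ ≤ max (-1 - 2 * (k:ℝ)) (-1 - 2 * (l:ℝ)) := le_max_left _ _
    · have : (l : ℝ) + 1 ≤ k := by exact_mod_cast h
      calc min (1 - 2 * (k:ℝ)) (1 - 2 * (l:ℝ)) ≤ 1 - 2 * (k:ℝ) := min_le_left _ _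
        _ ≤ -1 - 2 * (l:ℝ) := by linarith
        _ ≤ max (-1 - 2 * (k:ℝ)) (-1 - 2 * (l:ℝ)) := le_max_right _ _
  rw [← lintegral_iUnion (fun _ => measurableSet_Ico) hd, hU, Measure.restrict_univ]

lemma aux_meas (v : ℝ) (hv : 0 < v) (f : ℝ → ℝ) (hf : Measurable f) :
    Measurable (fun t => ∑' k : ℤ, Real.exp (-(f t - 2 * (k : ℝ)) ^ 2 / (2 * v))) := by
  have h : (fun t => ∑' k : ℤ, Real.exp (-(f t - 2 * (k : ℝ)) ^ 2 / (2 * v)))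
      = fun t => (∑' k : ℤ, ENNReal.ofReal (Real.exp (-(f t - 2 * (k : ℝ)) ^ 2 / (2 * v)))).toReal := by
    funext t
    rw [← ENNReal.ofReal_tsum_of_nonneg (fun k => Real.exp_nonneg _) (aux_summable v hv (f t)),
      ENNReal.toReal_ofReal (tsum_nonneg fun k => Real.exp_nonneg _)]
  rw [h]
  refine Measurable.ennreal_toReal (Measurable.ennreal_tsum fun k => ?_)
  exact (Real.measurable_exp.comp (((hf.sub measurable_const).pow_const 2).neg.div_const _)).ennreal_ofReal

lemma aux_inner (v1 v2 : ℝ) (h1 : 0 < v1) (h2 : 0 < v2) (x b : ℝ) :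
    ∑' k : ℤ, ∫⁻ y' in Set.Ico (-1 : ℝ) 1,
        ENNReal.ofReal (Real.exp (-(y' - x - 2 * (k : ℝ)) ^ 2 / (2 * v1)) *
          Real.exp (-(b - (y' - 2 * (k : ℝ))) ^ 2 / (2 * v2)))
      = ENNReal.ofReal (Real.sqrt (2 * Real.pi * (v1 * v2 / (v1 + v2))) *
          Real.exp (-(b - x) ^ 2 / (2 * (v1 + v2)))) := by
  set G : ℝ → ℝ := fun t => Real.exp (-(t - x) ^ 2 / (2 * v1)) * Real.exp (-(b - t) ^ 2 / (2 * v2))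
    with hG
  have hGm : Measurable G := by
    apply Measurable.mul
    · exact Real.measurable_exp.comp
        (((measurable_id.sub_const x).pow_const 2).neg.div_const _)
    · exact Real.measurable_exp.comp
        (((measurable_const.sub measurable_id).pow_const 2).neg.div_const _)
  have hGnn : ∀ t, 0 ≤ G t := fun t => mul_nonneg (Real.exp_nonneg _) (Real.exp_nonneg _)
  have hGint : Integrable G := by
    refine (aux_gauss_integrable v1 h1 x).mono' hGm.aestronglyMeasurable
      (Filter.Eventually.of_forall fun t => ?_)
    rw [Real.norm_of_nonneg (hGnn t)]
    have hle : Real.exp (-(b - t) ^ 2 / (2 * v2)) ≤ 1 := by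
      rw [← Real.exp_zero]
      apply Real.exp_le_exp.2
      apply div_nonpos_of_nonpos_of_nonneg (neg_nonpos.2 (sq_nonneg _)) (by positivity)
    calc Real.exp (-(t - x) ^ 2 / (2 * v1)) * Real.exp (-(b - t) ^ 2 / (2 * v2))
        ≤ Real.exp (-(t - x) ^ 2 / (2 * v1)) * 1 :=
          mul_le_mul_of_nonneg_left hle (Real.exp_nonneg _)
      _ = Real.exp (-(t - x) ^ 2 / (2 * v1)) := mul_one _
  calc ∑' k : ℤ, ∫⁻ y' in Set.Ico (-1 : ℝ) 1,
        ENNReal.ofReal (Real.exp (-(y' - x - 2 * (k : ℝ)) ^ 2 / (2 * v1)) *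
          Real.exp (-(b - (y' - 2 * (k : ℝ))) ^ 2 / (2 * v2)))
      = ∑' k : ℤ, ∫⁻ t in Set.Ico (-1 - 2 * (k : ℝ)) (1 - 2 * (k : ℝ)), ENNReal.ofReal (G t) := by
        congr 1
        funext k
        have hstep : ∀ y' : ℝ,
            ENNReal.ofReal (Real.exp (-(y' - x - 2 * (k : ℝ)) ^ 2 / (2 * v1)) *
              Real.exp (-(b - (y' - 2 * (k : ℝ))) ^ 2 / (2 * v2)))
            = ENNReal.ofReal (G (y' - 2 * (k : ℝ))) := by
          intro y'
          rw [hG]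
          congr 3
          ring
        simp_rw [hstep]
        exact aux_lint_shift (fun t => ENNReal.ofReal (G t)) (-1) 1 (2 * (k : ℝ))
    _ = ∫⁻ t, ENNReal.ofReal (G t) := aux_cover _
    _ = ENNReal.ofReal (∫ t, G t) :=
        (ofReal_integral_eq_lintegral_ofReal hGint (Filter.Eventually.of_forall hGnn)).symm
    _ = _ := by rw [hG, aux_gauss_conv v1 v2 h1 h2 x b]



lemma aux_key (v1 v2 : ℝ) (h1 : 0 < v1) (h2 : 0 < v2) (x y : ℝ) :
    (∫⁻ y' in Set.Ico (-1 : ℝ) 1,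
        (∑' k : ℤ, ENNReal.ofReal (Real.exp (-(y' - x - 2 * (k : ℝ)) ^ 2 / (2 * v1)))) *
        (∑' j : ℤ, ENNReal.ofReal (Real.exp (-(y - y' - 2 * (j : ℝ)) ^ 2 / (2 * v2)))))
      = ENNReal.ofReal (Real.sqrt (2 * Real.pi * (v1 * v2 / (v1 + v2)))) *
          ∑' m : ℤ, ENNReal.ofReal (Real.exp (-(y - x - 2 * (m : ℝ)) ^ 2 / (2 * (v1 + v2)))) := by
  have hAm : ∀ k : ℤ, Measurable (fun y' : ℝ =>
      ENNReal.ofReal (Real.exp (-(y' - x - 2 * (k : ℝ)) ^ 2 / (2 * v1)))) := fun k =>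
    (Real.measurable_exp.comp
      ((((measurable_id.sub_const x).sub_const _).pow_const 2).neg.div_const _)).ennreal_ofReal
  have hBm : ∀ j : ℤ, Measurable (fun y' : ℝ =>
      ENNReal.ofReal (Real.exp (-(y - y' - 2 * (j : ℝ)) ^ 2 / (2 * v2)))) := fun j =>
    (Real.measurable_exp.comp
      ((((measurable_const.sub measurable_id).sub_const _).pow_const 2).neg.div_const _)).ennreal_ofReal
  calc (∫⁻ y' in Set.Ico (-1 : ℝ) 1,
        (∑' k : ℤ, ENNReal.ofReal (Real.exp (-(y' - x - 2 * (k : ℝ)) ^ 2 / (2 * v1)))) *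
        (∑' j : ℤ, ENNReal.ofReal (Real.exp (-(y - y' - 2 * (j : ℝ)) ^ 2 / (2 * v2)))))
      = ∫⁻ y' in Set.Ico (-1 : ℝ) 1, ∑' p : ℤ × ℤ,
          ENNReal.ofReal (Real.exp (-(y' - x - 2 * (p.1 : ℝ)) ^ 2 / (2 * v1))) *
          ENNReal.ofReal (Real.exp (-(y - y' - 2 * (p.2 : ℝ)) ^ 2 / (2 * v2))) := by
        refine lintegral_congr fun y' => ?_
        rw [ENNReal.tsum_prod (f := fun (k j : ℤ) =>
          ENNReal.ofReal (Real.exp (-(y' - x - 2 * (k : ℝ)) ^ 2 / (2 * v1))) *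
          ENNReal.ofReal (Real.exp (-(y - y' - 2 * (j : ℝ)) ^ 2 / (2 * v2)))),
          ← ENNReal.tsum_mul_right]
        exact tsum_congr fun k => (ENNReal.tsum_mul_left).symm
    _ = ∑' p : ℤ × ℤ, ∫⁻ y' in Set.Ico (-1 : ℝ) 1,
          ENNReal.ofReal (Real.exp (-(y' - x - 2 * (p.1 : ℝ)) ^ 2 / (2 * v1))) *
          ENNReal.ofReal (Real.exp (-(y - y' - 2 * (p.2 : ℝ)) ^ 2 / (2 * v2))) :=
        lintegral_tsum fun p => ((hAm p.1).mul (hBm p.2)).aemeasurable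
    _ = ∑' (k : ℤ) (j : ℤ), ∫⁻ y' in Set.Ico (-1 : ℝ) 1,
          ENNReal.ofReal (Real.exp (-(y' - x - 2 * (k : ℝ)) ^ 2 / (2 * v1))) *
          ENNReal.ofReal (Real.exp (-(y - y' - 2 * (j : ℝ)) ^ 2 / (2 * v2))) :=
        ENNReal.tsum_prod (f := fun (k j : ℤ) => ∫⁻ y' in Set.Ico (-1 : ℝ) 1,
          ENNReal.ofReal (Real.exp (-(y' - x - 2 * (k : ℝ)) ^ 2 / (2 * v1))) *
          ENNReal.ofReal (Real.exp (-(y - y' - 2 * (j : ℝ)) ^ 2 / (2 * v2))))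
    _ = ∑' (k : ℤ) (m : ℤ), ∫⁻ y' in Set.Ico (-1 : ℝ) 1,
          ENNReal.ofReal (Real.exp (-(y' - x - 2 * (k : ℝ)) ^ 2 / (2 * v1))) *
          ENNReal.ofReal (Real.exp (-(y - y' - 2 * ((m - k : ℤ) : ℝ)) ^ 2 / (2 * v2))) := by
        refine tsum_congr fun k => ?_
        have h := (Equiv.subRight k).tsum_eq (fun j => ∫⁻ y' in Set.Ico (-1 : ℝ) 1,
          ENNReal.ofReal (Real.exp (-(y' - x - 2 * (k : ℝ)) ^ 2 / (2 * v1))) *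
          ENNReal.ofReal (Real.exp (-(y - y' - 2 * (j : ℝ)) ^ 2 / (2 * v2))))
        simp only [Equiv.subRight_apply] at h
        exact h.symm
    _ = ∑' (m : ℤ) (k : ℤ), ∫⁻ y' in Set.Ico (-1 : ℝ) 1,
          ENNReal.ofReal (Real.exp (-(y' - x - 2 * (k : ℝ)) ^ 2 / (2 * v1))) *
          ENNReal.ofReal (Real.exp (-(y - y' - 2 * ((m - k : ℤ) : ℝ)) ^ 2 / (2 * v2))) :=
        ENNReal.tsum_comm
    _ = ∑' m : ℤ, ENNReal.ofReal (Real.sqrt (2 * Real.pi * (v1 * v2 / (v1 + v2))) *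
          Real.exp (-(y - x - 2 * (m : ℝ)) ^ 2 / (2 * (v1 + v2)))) := by
        refine tsum_congr fun m => ?_
        have hAB : ∀ (k : ℤ) (y' : ℝ),
            ENNReal.ofReal (Real.exp (-(y' - x - 2 * (k : ℝ)) ^ 2 / (2 * v1))) *
            ENNReal.ofReal (Real.exp (-(y - y' - 2 * ((m - k : ℤ) : ℝ)) ^ 2 / (2 * v2)))
            = ENNReal.ofReal (Real.exp (-(y' - x - 2 * (k : ℝ)) ^ 2 / (2 * v1)) *
                Real.exp (-(y - 2 * (m : ℝ) - (y' - 2 * (k : ℝ))) ^ 2 / (2 * v2))) := by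
          intro k y'
          rw [← ENNReal.ofReal_mul (Real.exp_nonneg _)]
          congr 3
          push_cast
          ring
        simp_rw [hAB]
        rw [aux_inner v1 v2 h1 h2 x (y - 2 * (m : ℝ))]
        congr 3
        ring
    _ = ENNReal.ofReal (Real.sqrt (2 * Real.pi * (v1 * v2 / (v1 + v2)))) *
          ∑' m : ℤ, ENNReal.ofReal (Real.exp (-(y - x - 2 * (m : ℝ)) ^ 2 / (2 * (v1 + v2)))) := by
        simp_rw [ENNReal.ofReal_mul (Real.sqrt_nonneg _)]
        exact ENNReal.tsum_mul_left

end AuxLemmas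

/-- The mod-2ℤ BAWGN channel with variance `σ²` is degraded with respect to the one
with variance `σ'²`, via an intermediate wrapped Gaussian channel of variance `σ² - σ'²`. -/
theorem mod_two_channel_degraded (σ σ' : ℝ) (h0 : 0 < σ') (h1 : σ' < σ)
    (x : ℝ) (hx : x = 0 ∨ x = 1) (y : ℝ) (hy : y ∈ Set.Ico (-1 : ℝ) 1) :
    ∫ y' in Set.Ico (-1 : ℝ) 1,
        W1 σ' x y' * W1 (Real.sqrt (σ ^ 2 - σ' ^ 2)) y' y
      = W1 σ x y := by
  have hπ := Real.pi_pos
  have hv1 : 0 < σ' ^ 2 := by positivity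
  have hv2 : 0 < σ ^ 2 - σ' ^ 2 := by nlinarith
  have hV : 0 < σ ^ 2 := by nlinarith
  have hs2 : Real.sqrt (σ ^ 2 - σ' ^ 2) ^ 2 = σ ^ 2 - σ' ^ 2 := Real.sq_sqrt hv2.le
  have hsum : σ' ^ 2 + (σ ^ 2 - σ' ^ 2) = σ ^ 2 := by ring
  have hc1nn : (0:ℝ) ≤ (Real.sqrt (2 * Real.pi * σ' ^ 2))⁻¹ :=
    inv_nonneg.2 (Real.sqrt_nonneg _)
  have hc2nn : (0:ℝ) ≤ (Real.sqrt (2 * Real.pi * (σ ^ 2 - σ' ^ 2)))⁻¹ :=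
    inv_nonneg.2 (Real.sqrt_nonneg _)
  have hc3nn : (0:ℝ) ≤ (Real.sqrt (2 * Real.pi * σ ^ 2))⁻¹ :=
    inv_nonneg.2 (Real.sqrt_nonneg _)
  have hS1nn : ∀ y' : ℝ, (0:ℝ) ≤ ∑' k : ℤ, Real.exp (-(y' - x - 2 * (k : ℝ)) ^ 2 / (2 * σ' ^ 2)) :=
    fun y' => tsum_nonneg fun k => Real.exp_nonneg _
  have hS2nn : ∀ y' : ℝ,
      (0:ℝ) ≤ ∑' k : ℤ, Real.exp (-(y - y' - 2 * (k : ℝ)) ^ 2 / (2 * (σ ^ 2 - σ' ^ 2))) :=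
    fun y' => tsum_nonneg fun k => Real.exp_nonneg _
  have hS1m : Measurable fun y' : ℝ =>
      ∑' k : ℤ, Real.exp (-(y' - x - 2 * (k : ℝ)) ^ 2 / (2 * σ' ^ 2)) :=
    aux_meas (σ' ^ 2) hv1 (fun y' => y' - x) (measurable_id.sub_const x)
  have hS2m : Measurable fun y' : ℝ =>
      ∑' k : ℤ, Real.exp (-(y - y' - 2 * (k : ℝ)) ^ 2 / (2 * (σ ^ 2 - σ' ^ 2))) :=
    aux_meas (σ ^ 2 - σ' ^ 2) hv2 (fun y' => y - y') (measurable_const.sub measurable_id)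
  simp only [W1, hs2]
  rw [integral_eq_lintegral_of_nonneg_ae
    (Filter.Eventually.of_forall fun y' =>
      mul_nonneg (mul_nonneg hc1nn (hS1nn y')) (mul_nonneg hc2nn (hS2nn y')))
    (((hS1m.const_mul _).mul (hS2m.const_mul _)).aestronglyMeasurable)]
  have key : (∫⁻ y' in Set.Ico (-1 : ℝ) 1, ENNReal.ofReal
        ((Real.sqrt (2 * Real.pi * σ' ^ 2))⁻¹ *
            (∑' k : ℤ, Real.exp (-(y' - x - 2 * (k : ℝ)) ^ 2 / (2 * σ' ^ 2))) *
          ((Real.sqrt (2 * Real.pi * (σ ^ 2 - σ' ^ 2)))⁻¹ *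
            ∑' k : ℤ, Real.exp (-(y - y' - 2 * (k : ℝ)) ^ 2 / (2 * (σ ^ 2 - σ' ^ 2))))))
      = ENNReal.ofReal ((Real.sqrt (2 * Real.pi * σ ^ 2))⁻¹ *
          ∑' k : ℤ, Real.exp (-(y - x - 2 * (k : ℝ)) ^ 2 / (2 * σ ^ 2))) := by
    have hconst : (Real.sqrt (2 * Real.pi * σ' ^ 2))⁻¹ *
        (Real.sqrt (2 * Real.pi * (σ ^ 2 - σ' ^ 2)))⁻¹ *
        Real.sqrt (2 * Real.pi * (σ' ^ 2 * (σ ^ 2 - σ' ^ 2) / σ ^ 2))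
        = (Real.sqrt (2 * Real.pi * σ ^ 2))⁻¹ := by
      rw [← Real.sqrt_inv, ← Real.sqrt_inv, ← Real.sqrt_inv,
        ← Real.sqrt_mul (by positivity), ← Real.sqrt_mul (by positivity)]
      congr 1
      field_simp
    have hpt : ∀ y' : ℝ, ENNReal.ofReal
        ((Real.sqrt (2 * Real.pi * σ' ^ 2))⁻¹ *
            (∑' k : ℤ, Real.exp (-(y' - x - 2 * (k : ℝ)) ^ 2 / (2 * σ' ^ 2))) *
          ((Real.sqrt (2 * Real.pi * (σ ^ 2 - σ' ^ 2)))⁻¹ *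
            ∑' k : ℤ, Real.exp (-(y - y' - 2 * (k : ℝ)) ^ 2 / (2 * (σ ^ 2 - σ' ^ 2)))))
        = ENNReal.ofReal ((Real.sqrt (2 * Real.pi * σ' ^ 2))⁻¹ *
              (Real.sqrt (2 * Real.pi * (σ ^ 2 - σ' ^ 2)))⁻¹) *
            ((∑' k : ℤ, ENNReal.ofReal (Real.exp (-(y' - x - 2 * (k : ℝ)) ^ 2 / (2 * σ' ^ 2)))) *
             (∑' j : ℤ, ENNReal.ofReal
                (Real.exp (-(y - y' - 2 * (j : ℝ)) ^ 2 / (2 * (σ ^ 2 - σ' ^ 2)))))) := by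
      intro y'
      rw [show (Real.sqrt (2 * Real.pi * σ' ^ 2))⁻¹ *
            (∑' k : ℤ, Real.exp (-(y' - x - 2 * (k : ℝ)) ^ 2 / (2 * σ' ^ 2))) *
          ((Real.sqrt (2 * Real.pi * (σ ^ 2 - σ' ^ 2)))⁻¹ *
            ∑' k : ℤ, Real.exp (-(y - y' - 2 * (k : ℝ)) ^ 2 / (2 * (σ ^ 2 - σ' ^ 2))))
          = ((Real.sqrt (2 * Real.pi * σ' ^ 2))⁻¹ *
              (Real.sqrt (2 * Real.pi * (σ ^ 2 - σ' ^ 2)))⁻¹) *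
            ((∑' k : ℤ, Real.exp (-(y' - x - 2 * (k : ℝ)) ^ 2 / (2 * σ' ^ 2))) *
             (∑' k : ℤ, Real.exp (-(y - y' - 2 * (k : ℝ)) ^ 2 / (2 * (σ ^ 2 - σ' ^ 2)))))
          from by ring,
        ENNReal.ofReal_mul (mul_nonneg hc1nn hc2nn),
        ENNReal.ofReal_mul (hS1nn y'),
        ENNReal.ofReal_tsum_of_nonneg (fun k => Real.exp_nonneg _)
          (aux_summable (σ' ^ 2) hv1 (y' - x)),
        ENNReal.ofReal_tsum_of_nonneg (fun k => Real.exp_nonneg _)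
          (aux_summable (σ ^ 2 - σ' ^ 2) hv2 (y - y'))]
    calc (∫⁻ y' in Set.Ico (-1 : ℝ) 1, ENNReal.ofReal
          ((Real.sqrt (2 * Real.pi * σ' ^ 2))⁻¹ *
              (∑' k : ℤ, Real.exp (-(y' - x - 2 * (k : ℝ)) ^ 2 / (2 * σ' ^ 2))) *
            ((Real.sqrt (2 * Real.pi * (σ ^ 2 - σ' ^ 2)))⁻¹ *
              ∑' k : ℤ, Real.exp (-(y - y' - 2 * (k : ℝ)) ^ 2 / (2 * (σ ^ 2 - σ' ^ 2))))))
        = ∫⁻ y' in Set.Ico (-1 : ℝ) 1,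
            ENNReal.ofReal ((Real.sqrt (2 * Real.pi * σ' ^ 2))⁻¹ *
              (Real.sqrt (2 * Real.pi * (σ ^ 2 - σ' ^ 2)))⁻¹) *
            ((∑' k : ℤ, ENNReal.ofReal (Real.exp (-(y' - x - 2 * (k : ℝ)) ^ 2 / (2 * σ' ^ 2)))) *
             (∑' j : ℤ, ENNReal.ofReal
                (Real.exp (-(y - y' - 2 * (j : ℝ)) ^ 2 / (2 * (σ ^ 2 - σ' ^ 2)))))) :=
          lintegral_congr fun y' => hpt y'
      _ = ENNReal.ofReal ((Real.sqrt (2 * Real.pi * σ' ^ 2))⁻¹ *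
              (Real.sqrt (2 * Real.pi * (σ ^ 2 - σ' ^ 2)))⁻¹) *
            ∫⁻ y' in Set.Ico (-1 : ℝ) 1,
            ((∑' k : ℤ, ENNReal.ofReal (Real.exp (-(y' - x - 2 * (k : ℝ)) ^ 2 / (2 * σ' ^ 2)))) *
             (∑' j : ℤ, ENNReal.ofReal
                (Real.exp (-(y - y' - 2 * (j : ℝ)) ^ 2 / (2 * (σ ^ 2 - σ' ^ 2)))))) :=
          lintegral_const_mul' _ _ ENNReal.ofReal_ne_top
      _ = ENNReal.ofReal ((Real.sqrt (2 * Real.pi * σ' ^ 2))⁻¹ *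
              (Real.sqrt (2 * Real.pi * (σ ^ 2 - σ' ^ 2)))⁻¹) *
            (ENNReal.ofReal (Real.sqrt (2 * Real.pi * (σ' ^ 2 * (σ ^ 2 - σ' ^ 2) / σ ^ 2))) *
              ∑' m : ℤ, ENNReal.ofReal (Real.exp (-(y - x - 2 * (m : ℝ)) ^ 2 / (2 * σ ^ 2)))) := by
          rw [aux_key (σ' ^ 2) (σ ^ 2 - σ' ^ 2) hv1 hv2 x y, hsum]
      _ = ENNReal.ofReal ((Real.sqrt (2 * Real.pi * σ ^ 2))⁻¹) *
            ∑' m : ℤ, ENNReal.ofReal (Real.exp (-(y - x - 2 * (m : ℝ)) ^ 2 / (2 * σ ^ 2))) := by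
          rw [← mul_assoc, ← ENNReal.ofReal_mul (mul_nonneg hc1nn hc2nn), hconst]
      _ = ENNReal.ofReal ((Real.sqrt (2 * Real.pi * σ ^ 2))⁻¹ *
            ∑' k : ℤ, Real.exp (-(y - x - 2 * (k : ℝ)) ^ 2 / (2 * σ ^ 2))) := by
          rw [ENNReal.ofReal_mul hc3nn,
            ENNReal.ofReal_tsum_of_nonneg (fun k => Real.exp_nonneg _)
              (aux_summable (σ ^ 2) hV (y - x))]
  rw [key, ENNReal.toReal_ofReal
    (mul_nonneg hc3nn (tsum_nonneg fun k => Real.exp_nonneg _))]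
end

section
/- Discrete Gaussian ratio bound on ℤ-cosets: let σ_s > 0, r ≥ 1, and let λ₁, λ₂ ∈ ℝ with λ₂ - λ₁ = 2^{r-1} = 3Tσ_s, |λ₁| ≤ Tσ_s ≤ |λ₂|, λ₂ + λ₁ ≥ Tσ_s, for some T > 1. Then Σ_{x∈2^rℤ} exp(-(x+λ₁)²/(2σ_s²)) / Σ_{x∈2^rℤ} exp(-(x+λ₂)²/(2σ_s²)) ≥ (1/4)·exp((3/2)T²). -/
set_option maxHeartbeats 1000000

open Real

private lemma gauss_summable (c lam σ : ℝ) (hc : 0 < c) (hσ : 0 < σ) :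
    Summable (fun k : ℤ => Real.exp (-(c * (k : ℝ) + lam) ^ 2 / (2 * σ ^ 2))) := by
  set C : ℝ := Real.exp (lam ^ 2 / (2 * σ ^ 2)) with hC
  set q : ℝ := Real.exp (-(c ^ 2 / (4 * σ ^ 2))) with hqdef
  have hq0 : 0 ≤ q := Real.exp_nonneg _
  have hq : q < 1 := by
    apply Real.exp_lt_one_iff.mpr
    have : 0 < c ^ 2 / (4 * σ ^ 2) := by positivity
    linarith
  have geo := summable_geometric_of_lt_one hq0 hq
  have hmaj : Summable (fun k : ℤ => C * q ^ k.natAbs) := by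
    apply Summable.of_nat_of_neg_add_one
    · simpa using geo.mul_left C
    · apply Summable.congr (geo.mul_left (C * q))
      intro n
      have hn : ((-(↑n + 1) : ℤ)).natAbs = n + 1 := by omega
      rw [hn, pow_succ]
      ring
  apply hmaj.of_nonneg_of_le (fun k => (Real.exp_pos _).le)
  intro k
  rw [hC, hqdef, ← Real.exp_nat_mul, ← Real.exp_add]
  apply Real.exp_le_exp.mpr
  set N : ℝ := (k.natAbs : ℝ) with hN
  have hNsq : N ^ 2 = (k : ℝ) ^ 2 := by
    rw [hN, ← Int.cast_natCast, ← Int.cast_pow, Int.natAbs_sq, Int.cast_pow]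
  have hN0 : 0 ≤ N := by positivity
  have hk2 : N ≤ (k : ℝ) ^ 2 := by
    rw [← hNsq, hN]
    exact_mod_cast Nat.le_self_pow two_ne_zero k.natAbs
  have key : c ^ 2 * (k : ℝ) ^ 2 / 2 - lam ^ 2 ≤ (c * (k : ℝ) + lam) ^ 2 := by
    nlinarith [sq_nonneg (c * (k : ℝ) + 2 * lam)]
  have expand : lam ^ 2 / (2 * σ ^ 2) + N * -(c ^ 2 / (4 * σ ^ 2))
      - (-(c * (k : ℝ) + lam) ^ 2 / (2 * σ ^ 2))
      = (2 * lam ^ 2 - N * c ^ 2 + 2 * (c * (k : ℝ) + lam) ^ 2) / (4 * σ ^ 2) := by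
    field_simp
    ring
  have hnum : 0 ≤ 2 * lam ^ 2 - N * c ^ 2 + 2 * (c * (k : ℝ) + lam) ^ 2 := by
    nlinarith [sq_nonneg c]
  nlinarith [div_nonneg hnum (by positivity : (0:ℝ) ≤ 4 * σ ^ 2), expand]

/-- Discrete Gaussian ratio bound on cosets of `2^r ℤ`. -/
theorem discrete_gaussian_coset_ratio (σs T : ℝ) (r : ℕ)
    (hσ : 0 < σs) (hr : 1 ≤ r) (hT : 1 < T) (lam1 lam2 : ℝ)
    (hdiff : lam2 - lam1 = (2 : ℝ) ^ (r - 1))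
    (hscale : (2 : ℝ) ^ (r - 1) = 3 * T * σs)
    (h1 : |lam1| ≤ T * σs) (h2 : T * σs ≤ |lam2|)
    (hsum : T * σs ≤ lam2 + lam1) :
    (1 / 4) * Real.exp ((3 / 2) * T ^ 2)
      ≤ (∑' k : ℤ, Real.exp (-((2 : ℝ) ^ r * (k : ℝ) + lam1) ^ 2 / (2 * σs ^ 2)))
        / (∑' k : ℤ, Real.exp (-((2 : ℝ) ^ r * (k : ℝ) + lam2) ^ 2 / (2 * σs ^ 2))) := by
  have hT0 : 0 < T := lt_trans one_pos hT
  set a : ℝ := T * σs with ha_def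
  have ha : 0 < a := mul_pos hT0 hσ
  have hcpos : (0:ℝ) < (2:ℝ) ^ r := by positivity
  have hc : (2:ℝ) ^ r = 6 * a := by
    have hrr : r - 1 + 1 = r := Nat.sub_add_cancel hr
    calc (2:ℝ) ^ r = (2:ℝ) ^ (r - 1) * 2 := by rw [← pow_succ, hrr]
      _ = 6 * a := by rw [hscale]; ring
  rw [hscale] at hdiff
  obtain ⟨hl1lo, hl1hi⟩ := abs_le.mp h1
  have hl2lo : 2 * a ≤ lam2 := by have h := ha_def; linarith
  have hl2hi : lam2 ≤ 4 * a := by have h := ha_def; linarith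
  have hs1 := gauss_summable ((2:ℝ)^r) lam1 σs hcpos hσ
  have hs2 := gauss_summable ((2:ℝ)^r) lam2 σs hcpos hσ
  -- numerator lower bound
  have hnum : Real.exp (-(T ^ 2) / 2)
      ≤ ∑' k : ℤ, Real.exp (-((2 : ℝ) ^ r * (k : ℝ) + lam1) ^ 2 / (2 * σs ^ 2)) := by
    have h0 : Real.exp (-(T ^ 2) / 2)
        ≤ Real.exp (-((2 : ℝ) ^ r * ((0:ℤ) : ℝ) + lam1) ^ 2 / (2 * σs ^ 2)) := by
      apply Real.exp_le_exp.mpr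
      have hl1sq : lam1 ^ 2 ≤ a ^ 2 := by nlinarith
      have hdivle : ((2 : ℝ) ^ r * ((0:ℤ) : ℝ) + lam1) ^ 2 / (2 * σs ^ 2) ≤ T ^ 2 / 2 := by
        rw [div_le_div_iff₀ (by positivity) (by norm_num)]
        push_cast
        nlinarith
      rw [neg_div, neg_div]
      exact neg_le_neg hdivle
    calc Real.exp (-(T ^ 2) / 2)
        ≤ Real.exp (-((2 : ℝ) ^ r * ((0:ℤ) : ℝ) + lam1) ^ 2 / (2 * σs ^ 2)) := h0
      _ ≤ _ := Summable.le_tsum hs1 0 (fun _ _ => (Real.exp_pos _).le)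
  -- denominator upper bound
  set E : ℝ := Real.exp (-(2 * T ^ 2)) with hE_def
  set Q : ℝ := Real.exp (-(12 * T ^ 2)) with hQ_def
  have hQ0 : 0 ≤ Q := Real.exp_nonneg _
  have hQhalf : Q ≤ 1 / 2 := by
    have h12 : Real.exp (-(12 * T ^ 2)) ≤ Real.exp (-1) := by
      apply Real.exp_le_exp.mpr; nlinarith
    have hexp1 : (2:ℝ) ≤ Real.exp 1 := by
      have := Real.add_one_le_exp (1:ℝ); linarith
    have : Real.exp (-1) ≤ 1 / 2 := by
      rw [Real.exp_neg]
      rw [inv_le_comm₀ (Real.exp_pos 1) (by norm_num)]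
      linarith
    linarith
  have hQ1 : Q < 1 := lt_of_le_of_lt hQhalf (by norm_num)
  have geo := summable_geometric_of_lt_one hQ0 hQ1
  set m : ℤ → ℝ := fun k => E * Q ^ (k.toNat + (-(k + 1)).toNat) with hm_def
  have hmn : ∀ n : ℕ, m (n : ℤ) = E * Q ^ n := by
    intro n
    have h : ((n:ℤ).toNat + (-((n:ℤ) + 1)).toNat) = n := by omega
    show E * Q ^ ((n:ℤ).toNat + (-((n:ℤ) + 1)).toNat) = E * Q ^ n
    rw [h]
  have hmneg : ∀ n : ℕ, m (-((n:ℤ) + 1)) = E * Q ^ n := by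
    intro n
    have h : ((-((n:ℤ) + 1)).toNat + (-(-((n:ℤ) + 1) + 1)).toNat) = n := by omega
    show E * Q ^ ((-((n:ℤ) + 1)).toNat + (-(-((n:ℤ) + 1) + 1)).toNat) = E * Q ^ n
    rw [h]
  have hsm : Summable m :=
    Summable.of_nat_of_neg_add_one ((geo.mul_left E).congr fun n => (hmn n).symm)
      ((geo.mul_left E).congr fun n => (hmneg n).symm)
  have hptwise : ∀ k : ℤ,
      Real.exp (-((2 : ℝ) ^ r * (k : ℝ) + lam2) ^ 2 / (2 * σs ^ 2)) ≤ m k := by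
    intro k
    have hNkey : ((4:ℝ) + 24 * ((k.toNat + (-(k + 1)).toNat : ℕ) : ℝ)) * a ^ 2
        ≤ ((2 : ℝ) ^ r * (k : ℝ) + lam2) ^ 2 := by
      rw [hc]
      cases k with
      | ofNat n =>
        have hN : ((n:ℤ).toNat + (-((n:ℤ) + 1)).toNat) = n := by omega
        rw [Int.ofNat_eq_coe, hN]
        have hn0 : (0:ℝ) ≤ (n:ℝ) := Nat.cast_nonneg n
        push_cast
        nlinarith [mul_nonneg (mul_nonneg ha.le hn0) (by linarith : (0:ℝ) ≤ lam2 - 2 * a),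
          sq_nonneg ((n:ℝ) * a), sq_nonneg (lam2 - 2 * a)]
      | negSucc n =>
        have hN : ((Int.negSucc n).toNat + (-(Int.negSucc n + 1)).toNat) = n := by
          rw [Int.negSucc_eq]; omega
        rw [hN]
        have hcast : ((Int.negSucc n : ℤ) : ℝ) = -((n:ℝ) + 1) := by
          rw [Int.negSucc_eq]; push_cast; ring
        rw [hcast]
        have hn0 : (0:ℝ) ≤ (n:ℝ) := Nat.cast_nonneg n
        nlinarith [mul_nonneg (mul_nonneg ha.le hn0) (by linarith : (0:ℝ) ≤ 4 * a - lam2),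
          sq_nonneg ((n:ℝ) * a), sq_nonneg (4 * a - lam2)]
    rw [hm_def]
    simp only
    rw [hE_def, hQ_def, ← Real.exp_nat_mul, ← Real.exp_add]
    apply Real.exp_le_exp.mpr
    set N : ℝ := ((k.toNat + (-(k + 1)).toNat : ℕ) : ℝ) with hN_def
    have hrewrite : ((4:ℝ) + 24 * N) * a ^ 2 / (2 * σs ^ 2) = 2 * T ^ 2 + 12 * T ^ 2 * N := by
      rw [ha_def]; field_simp; ring
    have hstep : ((4:ℝ) + 24 * N) * a ^ 2 / (2 * σs ^ 2)
        ≤ ((2 : ℝ) ^ r * (k : ℝ) + lam2) ^ 2 / (2 * σs ^ 2) := by gcongr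
    rw [hrewrite] at hstep
    have := neg_le_neg hstep
    rw [← neg_div] at this
    linarith
  have hden_le : (∑' k : ℤ, Real.exp (-((2 : ℝ) ^ r * (k : ℝ) + lam2) ^ 2 / (2 * σs ^ 2)))
      ≤ 4 * E := by
    have h1' : (∑' k : ℤ, Real.exp (-((2 : ℝ) ^ r * (k : ℝ) + lam2) ^ 2 / (2 * σs ^ 2)))
        ≤ ∑' k : ℤ, m k := Summable.tsum_le_tsum hptwise hs2 hsm
    have htsm : (∑' k : ℤ, m k) = (∑' n : ℕ, E * Q ^ n) + ∑' n : ℕ, E * Q ^ n := by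
      rw [tsum_of_nat_of_neg_add_one ((geo.mul_left E).congr fun n => (hmn n).symm)
        ((geo.mul_left E).congr fun n => (hmneg n).symm)]
      rw [tsum_congr hmn, tsum_congr hmneg]
    have hgeo_val : (∑' n : ℕ, E * Q ^ n) = E * (1 - Q)⁻¹ := by
      rw [tsum_mul_left, tsum_geometric_of_lt_one hQ0 hQ1]
    have hinv : (1 - Q)⁻¹ ≤ 2 := by
      rw [inv_le_comm₀ (by linarith) (by norm_num)]
      linarith
    have hE0 : 0 < E := Real.exp_pos _
    calc (∑' k : ℤ, Real.exp (-((2 : ℝ) ^ r * (k : ℝ) + lam2) ^ 2 / (2 * σs ^ 2)))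
        ≤ ∑' k : ℤ, m k := h1'
      _ = E * (1 - Q)⁻¹ + E * (1 - Q)⁻¹ := by rw [htsm, hgeo_val]
      _ ≤ E * 2 + E * 2 := by
          have := mul_le_mul_of_nonneg_left hinv hE0.le
          linarith
      _ = 4 * E := by ring
  have hden_pos : 0 < ∑' k : ℤ, Real.exp (-((2 : ℝ) ^ r * (k : ℝ) + lam2) ^ 2 / (2 * σs ^ 2)) :=
    Summable.tsum_pos hs2 (fun _ => (Real.exp_pos _).le) 0 (Real.exp_pos _)
  have hkey : (1 / 4) * Real.exp ((3 / 2) * T ^ 2) = Real.exp (-(T ^ 2) / 2) / (4 * E) := by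
    rw [hE_def, eq_div_iff (by positivity)]
    have hr2 : (1/4 :ℝ) * Real.exp ((3/2) * T ^ 2) * (4 * Real.exp (-(2 * T ^ 2)))
        = Real.exp ((3/2) * T ^ 2) * Real.exp (-(2 * T ^ 2)) := by ring
    rw [hr2, ← Real.exp_add]
    congr 1
    ring
  rw [hkey]
  exact div_le_div₀ (tsum_nonneg fun _ => (Real.exp_pos _).le) hnum hden_pos hden_le
end
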